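/- Let f be a multiplicative function from the positive integers to the complex numbers that is bounded in mean square, and suppose that for every nonnegative integer k the function n ↦ f(n)·(n/σ(n))^k possesses a mean value. Then for every continuous function ψ : [0,1] → ℂ, the limit lim_{x→∞} (1/x) ∑_{n≤x} f(n)·ψ(n/σ(n)) exists. -/

import Mathlib

/-!
Cauchy–Schwarz turns the mean-square bound into `∑_{n ≤ N} ‖f n‖ ≤ B N`, so replacing `ψ` by a
function uniformly `ε`-close to it on `[0, 1]` moves every average `N⁻¹ ∑_{n ≤ N} f n ψ (n/σ n)`
by at most `B ε`. For polynomials the averages converge by linearity from the moment hypotheses,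
and by Weierstrass polynomials are uniformly dense, so the averages for `ψ` form a Cauchy sequence.
-/

open Filter ArithmeticFunction

/-- The ratio `n/σ(n)` as a real number. -/
noncomputable def sigmaRatio (n : ℕ) : ℝ := (n : ℝ) / ((sigma 1 n : ℕ) : ℝ)

open Finset Topology

lemma le_sigma_one (n : ℕ) : n ≤ sigma 1 n := by
  rcases n.eq_zero_or_pos with rfl | hn
  · exact le_rfl
  · rw [sigma_one_apply]
    exact single_le_sum (fun i _ => Nat.zero_le i) (Nat.mem_divisors_self n hn.ne')

lemma sigmaRatio_mem_Icc (n : ℕ) : sigmaRatio n ∈ Set.Icc (0 : ℝ) 1 :=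
  ⟨by unfold sigmaRatio; positivity,
    div_le_one_of_le₀ (by exact_mod_cast le_sigma_one n) (by positivity)⟩

lemma sum_le_sqrt_mul_card_of_sum_sq_le {ι : Type*} {s : Finset ι} {g : ι → ℝ} {C : ℝ}
    (h : ∑ i ∈ s, g i ^ 2 ≤ C * #s) : ∑ i ∈ s, g i ≤ √C * #s := by
  have hsq : (∑ i ∈ s, g i) ^ 2 ≤ C * (#s : ℝ) ^ 2 :=
    calc (∑ i ∈ s, g i) ^ 2 ≤ #s * ∑ i ∈ s, g i ^ 2 := sq_sum_le_card_mul_sum_sq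
      _ ≤ #s * (C * #s) := by gcongr
      _ = C * (#s : ℝ) ^ 2 := by ring
  calc ∑ i ∈ s, g i ≤ |∑ i ∈ s, g i| := le_abs_self _
    _ ≤ √(C * (#s : ℝ) ^ 2) := Real.abs_le_sqrt hsq
    _ = √C * #s := by rw [Real.sqrt_mul' _ (by positivity), Real.sqrt_sq (by positivity)]

lemma exists_pos_eventually_sum_norm_le {E : Type*} [SeminormedAddGroup E] {f : ℕ → E}
    (h : ∃ C : ℝ, ∀ᶠ N : ℕ in atTop, ∑ n ∈ Icc 1 N, ‖f n‖ ^ 2 ≤ C * N) :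
    ∃ B > 0, ∀ᶠ N : ℕ in atTop, ∑ n ∈ Icc 1 N, ‖f n‖ ≤ B * N := by
  obtain ⟨C, hC⟩ := h
  refine ⟨√C + 1, by positivity, hC.mono fun N hN => ?_⟩
  have hcard : ((#(Icc 1 N) : ℕ) : ℝ) = N := by simp
  calc ∑ n ∈ Icc 1 N, ‖f n‖ ≤ √C * N := by
        simpa only [hcard] using sum_le_sqrt_mul_card_of_sum_sq_le (s := Icc 1 N) (by rwa [hcard])
    _ ≤ (√C + 1) * N := by gcongr; linarith

noncomputable def cesaroAvg (u : ℕ → ℂ) (N : ℕ) : ℂ := (N : ℂ)⁻¹ * ∑ n ∈ Icc 1 N, u n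

lemma cesaroAvg_add (u v : ℕ → ℂ) (N : ℕ) :
    cesaroAvg (fun n => u n + v n) N = cesaroAvg u N + cesaroAvg v N := by
  simp only [cesaroAvg, sum_add_distrib, mul_add]

lemma cesaroAvg_sub (u v : ℕ → ℂ) (N : ℕ) :
    cesaroAvg (fun n => u n - v n) N = cesaroAvg u N - cesaroAvg v N := by
  simp only [cesaroAvg, sum_sub_distrib, mul_sub]

lemma cesaroAvg_const_mul (c : ℂ) (u : ℕ → ℂ) (N : ℕ) :
    cesaroAvg (fun n => c * u n) N = c * cesaroAvg u N := by
  simp only [cesaroAvg, ← mul_sum]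
  ring

lemma norm_cesaroAvg_mul_sub_le {f g h : ℕ → ℂ} {B ε : ℝ} {N : ℕ} (hB : 0 ≤ B) (hε : 0 ≤ ε)
    (hf : ∑ n ∈ Icc 1 N, ‖f n‖ ≤ B * N) (hgh : ∀ n ∈ Icc 1 N, ‖g n - h n‖ ≤ ε) :
    ‖cesaroAvg (fun n => f n * g n) N - cesaroAvg (fun n => f n * h n) N‖ ≤ B * ε := by
  rw [← cesaroAvg_sub]
  calc ‖cesaroAvg (fun n => f n * g n - f n * h n) N‖
      = (N : ℝ)⁻¹ * ‖∑ n ∈ Icc 1 N, f n * (g n - h n)‖ := by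
        simp only [cesaroAvg, mul_sub, norm_mul, norm_inv, Complex.norm_natCast]
    _ ≤ (N : ℝ)⁻¹ * ∑ n ∈ Icc 1 N, ‖f n‖ * ε := by
        gcongr
        refine (norm_sum_le _ _).trans (sum_le_sum fun n hn => ?_)
        rw [norm_mul]
        exact mul_le_mul_of_nonneg_left (hgh n hn) (norm_nonneg _)
    _ ≤ (N : ℝ)⁻¹ * (B * N * ε) := by
        rw [← sum_mul]
        gcongr
    _ ≤ B * ε := by
        rcases N.eq_zero_or_pos with rfl | hN
        · simpa using mul_nonneg hB hε
        · exact le_of_eq (by field_simp)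

open Polynomial in
lemma exists_tendsto_cesaroAvg_mul_eval {f a : ℕ → ℂ}
    (hmom : ∀ k : ℕ, ∃ c : ℂ, Tendsto (cesaroAvg fun n => f n * a n ^ k) atTop (𝓝 c))
    (p : ℂ[X]) : ∃ L : ℂ, Tendsto (cesaroAvg fun n => f n * p.eval (a n)) atTop (𝓝 L) := by
  induction p using Polynomial.induction_on' with
  | add p q hp hq =>
    obtain ⟨L₁, h₁⟩ := hp
    obtain ⟨L₂, h₂⟩ := hq
    refine ⟨L₁ + L₂, (h₁.add h₂).congr fun N => ?_⟩
    simp only [eval_add, mul_add, cesaroAvg_add]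
  | monomial k b =>
    obtain ⟨c, hc⟩ := hmom k
    refine ⟨b * c, (hc.const_mul b).congr fun N => ?_⟩
    simp only [eval_monomial, mul_left_comm (f _), cesaroAvg_const_mul]

open Polynomial in
lemma exists_polynomial_near_of_continuousOn_complex (a b : ℝ) (ψ : ℝ → ℂ)
    (hψ : ContinuousOn ψ (Set.Icc a b)) (ε : ℝ) (hε : 0 < ε) :
    ∃ p : ℂ[X], ∀ x ∈ Set.Icc a b, ‖ψ x - p.eval (x : ℂ)‖ < ε := by
  obtain ⟨q, hq⟩ := exists_polynomial_near_of_continuousOn a b (fun x => (ψ x).re)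
    (Complex.continuous_re.comp_continuousOn hψ) (ε / 2) (by positivity)
  obtain ⟨r, hr⟩ := exists_polynomial_near_of_continuousOn a b (fun x => (ψ x).im)
    (Complex.continuous_im.comp_continuousOn hψ) (ε / 2) (by positivity)
  refine ⟨q.map Complex.ofRealHom + C Complex.I * r.map Complex.ofRealHom, fun x hx => ?_⟩
  have hmap : ∀ s : ℝ[X], (s.map Complex.ofRealHom).eval (x : ℂ) = ((s.eval x : ℝ) : ℂ) :=
    fun s => eval_map_apply Complex.ofRealHom x
  simp only [eval_add, eval_mul, eval_C, hmap]
  calc _ ≤ |(ψ x).re - q.eval x| + |(ψ x).im - r.eval x| := by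
        simpa using Complex.norm_le_abs_re_add_abs_im
          (ψ x - (((q.eval x : ℝ) : ℂ) + Complex.I * ((r.eval x : ℝ) : ℂ)))
    _ < ε / 2 + ε / 2 := by
        rw [abs_sub_comm, abs_sub_comm (ψ x).im]
        exact add_lt_add (hq x hx) (hr x hx)
    _ = ε := add_halves ε

lemma cauchySeq_of_forall_eventually_dist_le {α : Type*} [PseudoMetricSpace α] {u : ℕ → α}
    (h : ∀ ε > 0, ∃ v : ℕ → α, CauchySeq v ∧ ∀ᶠ N in atTop, dist (u N) (v N) ≤ ε) :
    CauchySeq u := by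
  refine Metric.cauchySeq_iff.mpr fun ε hε => ?_
  obtain ⟨v, hv, hclose⟩ := h (ε / 4) (by positivity)
  obtain ⟨N₁, hN₁⟩ := Metric.cauchySeq_iff.mp hv (ε / 4) (by positivity)
  obtain ⟨N₂, hN₂⟩ := eventually_atTop.mp hclose
  refine ⟨max N₁ N₂, fun m hm n hn => ?_⟩
  calc dist (u m) (u n) ≤ dist (u m) (v m) + dist (v m) (v n) + dist (v n) (u n) :=
        dist_triangle4 _ _ _ _
    _ ≤ ε / 4 + ε / 4 + ε / 4 := by
        gcongr
        · exact hN₂ m (le_of_max_le_right hm)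
        · exact (hN₁ m (le_of_max_le_left hm) n (le_of_max_le_left hn)).le
        · rw [dist_comm]; exact hN₂ n (le_of_max_le_right hn)
    _ < ε := by linarith

theorem smoothed_mean_value_exists_general (f : ℕ → ℂ)
    (hms : ∃ C : ℝ, ∀ᶠ N : ℕ in atTop, ∑ n ∈ Finset.Icc 1 N, ‖f n‖ ^ 2 ≤ C * N)
    (hmean : ∀ k : ℕ, ∃ c : ℂ,
      Tendsto (fun N : ℕ => (N : ℂ)⁻¹ * ∑ n ∈ Finset.Icc 1 N,
        f n * ((sigmaRatio n : ℝ) : ℂ) ^ k) atTop (nhds c)) :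
    ∀ ψ : ℝ → ℂ, ContinuousOn ψ (Set.Icc 0 1) →
      ∃ L : ℂ, Tendsto (fun N : ℕ => (N : ℂ)⁻¹ * ∑ n ∈ Finset.Icc 1 N,
        f n * ψ (sigmaRatio n)) atTop (nhds L) := by
  intro ψ hψ
  obtain ⟨B, hB, hfB⟩ := exists_pos_eventually_sum_norm_le hms
  refine cauchySeq_tendsto_of_complete
    (cauchySeq_of_forall_eventually_dist_le fun ε hε => ?_)
  obtain ⟨p, hp⟩ := exists_polynomial_near_of_continuousOn_complex 0 1 ψ hψ (ε / B) (by positivity)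
  obtain ⟨L, hL⟩ := exists_tendsto_cesaroAvg_mul_eval hmean p
  refine ⟨_, hL.cauchySeq, hfB.mono fun N hN => ?_⟩
  calc dist _ _ ≤ B * (ε / B) := by
        rw [dist_eq_norm]
        exact norm_cesaroAvg_mul_sub_le hB.le (by positivity) hN
          fun n _ => (hp _ (sigmaRatio_mem_Icc n)).le
    _ = ε := mul_div_cancel₀ ε hB.ne'

theorem smoothed_mean_value_exists (f : ℕ → ℂ)
    (hf1 : f 1 = 1)
    (hfmul : ∀ m n : ℕ, Nat.Coprime m n → f (m * n) = f m * f n)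
    (hms : ∃ C : ℝ, ∀ᶠ N : ℕ in atTop, ∑ n ∈ Finset.Icc 1 N, ‖f n‖ ^ 2 ≤ C * N)
    (hmean : ∀ k : ℕ, ∃ c : ℂ,
      Tendsto (fun N : ℕ => (N : ℂ)⁻¹ * ∑ n ∈ Finset.Icc 1 N,
        f n * ((sigmaRatio n : ℝ) : ℂ) ^ k) atTop (nhds c)) :
    ∀ ψ : ℝ → ℂ, ContinuousOn ψ (Set.Icc 0 1) →
      ∃ L : ℂ, Tendsto (fun N : ℕ => (N : ℂ)⁻¹ * ∑ n ∈ Finset.Icc 1 N,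
        f n * ψ (sigmaRatio n)) atTop (nhds L) :=
  smoothed_mean_value_exists_general f hms hmean
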